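/- arXiv:1712.09507 — 6 statements merged into one kernel-verified Lean document; each statement's English description precedes it below -/
import Mathlib

section
/- For real x with 0 < x < 1/3, the function L(x) = x/sqrt(1 - 2x - 3x^2) satisfies L(x) = x + x*L(x) + 2x*L(x)*M(x), where M(x) = (1 - x - sqrt(1 - 2x - 3x^2))/(2x). -/
theorem leaves_functional_equation (x : ℝ) (hx0 : 0 < x) (hx : x < 1/3) :
    x / Real.sqrt (1 - 2*x - 3*x^2) =
      x + x * (x / Real.sqrt (1 - 2*x - 3*x^2)) +
        2 * x * (x / Real.sqrt (1 - 2*x - 3*x^2)) *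
          ((1 - x - Real.sqrt (1 - 2*x - 3*x^2)) / (2*x)) := by
  have hpos : 0 < 1 - 2*x - 3*x^2 := by nlinarith
  set s := Real.sqrt (1 - 2*x - 3*x^2) with hs
  have hsp : 0 < s := Real.sqrt_pos.mpr hpos
  have hsq : s^2 = 1 - 2*x - 3*x^2 := Real.sq_sqrt hpos.le
  field_simp
  ring
end

section
/- For real x with 0 < x < 1/3, if P and R are real numbers satisfying P = R + x*P + 2x*P*M(x) with M(x) = (1 - x - sqrt(1-2x-3x^2))/(2x), then P = R / sqrt(1 - 2x - 3x^2). -/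
theorem protected_transfer (x : ℝ) (hx0 : 0 < x) (hx : x < 1/3) (P R : ℝ)
    (h : P = R + x * P + 2 * x * P * ((1 - x - Real.sqrt (1 - 2*x - 3*x^2)) / (2*x))) :
    P = R / Real.sqrt (1 - 2*x - 3*x^2) := by
  have h1 : (0:ℝ) < 1 - 2*x - 3*x^2 := by nlinarith
  have hs : 0 < Real.sqrt (1 - 2*x - 3*x^2) := Real.sqrt_pos.mpr h1
  set s := Real.sqrt (1 - 2*x - 3*x^2) with hsdef
  have hx' : x ≠ 0 := hx0.ne'
  have h2 : 2 * x * P * ((1 - x - s) / (2*x)) = P * (1 - x - s) := by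
    field_simp
  rw [h2] at h
  have : P * s = R := by nlinarith
  field_simp [hs.ne']
  linarith [this]
end

section
/- Define p_k by p_0 = 1 and p_{k+1} = (1/3)*p_k + (1/3)*p_k^2. Then the ratio p_{k+1}/p_k converges to 1/3 as k → ∞. -/
open Filter

theorem protected_probs_ratio (p : ℕ → ℝ)
    (h0 : p 0 = 1) (hrec : ∀ k, p (k+1) = (1/3) * p k + (1/3) * (p k)^2) :
    Tendsto (fun k => p (k+1) / p k) atTop (nhds (1/3)) := by
  have hpos : ∀ k, 0 < p k ∧ p k ≤ 1 := by
    intro k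
    induction k with
    | zero => rw [h0]; norm_num
    | succ n ih =>
      obtain ⟨hp, hle⟩ := ih
      rw [hrec n]
      constructor
      · positivity
      · nlinarith
  have hbound : ∀ k, p k ≤ (2/3)^k := by
    intro k
    induction k with
    | zero => simp [h0]
    | succ n ih =>
      have h1 : p (n+1) ≤ (2/3) * p n := by
        rw [hrec n]; nlinarith [(hpos n).1, (hpos n).2]
      calc p (n+1) ≤ (2/3) * p n := h1
        _ ≤ (2/3) * (2/3)^n := by nlinarith
        _ = (2/3)^(n+1) := (pow_succ' _ _).symm
  have htends : Tendsto p atTop (nhds 0) := by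
    have h1 : Tendsto (fun k : ℕ => (2/3 : ℝ)^k) atTop (nhds 0) :=
      tendsto_pow_atTop_nhds_zero_of_lt_one (by norm_num) (by norm_num)
    exact squeeze_zero (fun k => (hpos k).1.le) hbound h1
  have heq : ∀ k, p (k+1) / p k = 1/3 + (1/3) * p k := by
    intro k
    rw [hrec k]
    field_simp [(hpos k).1.ne']
  simp_rw [heq]
  have : Tendsto (fun k => (1:ℝ)/3 + (1/3) * p k) atTop (nhds (1/3 + (1/3) * 0)) :=
    tendsto_const_nhds.add (tendsto_const_nhds.mul htends)
  simpa using this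
end

section
/- Define b_k by b_0 = 1/3 and b_{k+1} = (1/3)*b_k + (1/3)*b_k^2. Then the series sum over k ≥ 0 of b_k converges, and its sum S satisfies 0.5683 < S < 0.5684. -/
set_option maxHeartbeats 1000000

theorem balanced_prob_bounds (b : ℕ → ℝ)
    (h0 : b 0 = 1/3) (hrec : ∀ k, b (k+1) = (1/3) * b k + (1/3) * (b k)^2) :
    Summable b ∧ 0.5683 < ∑' k, b k ∧ ∑' k, b k < 0.5684 := by
  have hb : ∀ k, 0 < b k ∧ b k ≤ 1/3 := by
    intro k
    induction k with
    | zero => rw [h0]; norm_num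
    | succ n ih =>
      rw [hrec]
      constructor
      · nlinarith [ih.1, ih.2]
      · nlinarith [ih.1, ih.2]
  have hstep : ∀ k, b (k+1) ≤ (4/9) * b k := by
    intro k
    rw [hrec]
    nlinarith [(hb k).1, (hb k).2]
  have hgeom : ∀ n j, b (n+j) ≤ b n * (4/9)^j := by
    intro n j
    induction j with
    | zero => simp
    | succ m ih =>
      have h1 : b (n + (m+1)) = b ((n+m)+1) := by ring_nf
      rw [h1]
      calc b ((n+m)+1) ≤ (4/9) * b (n+m) := hstep (n+m)
        _ ≤ (4/9) * (b n * (4/9)^m) := by nlinarith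
        _ = b n * (4/9)^(m+1) := by ring
  have hgs : Summable (fun j : ℕ => ((4:ℝ)/9)^j) :=
    summable_geometric_of_lt_one (by norm_num) (by norm_num)
  have hsum : Summable b :=
    Summable.of_nonneg_of_le (fun k => (hb k).1.le)
      (fun k => by simpa [h0] using hgeom 0 k) (hgs.mul_left (1/3 : ℝ))
  have hl0 : ((1:ℝ)/3) ≤ b 0 := by rw [h0]
  have hu0 : b 0 ≤ ((1:ℝ)/3) := by rw [h0]
  have hl1 : (1481481/10000000 : ℝ) ≤ b 1 := by
    have h := hrec 0
    have h1 : ((1/3 : ℝ))^2 ≤ (b 0)^2 := by nlinarith [hl0, (hb 0).1]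
    have h2 : (1481481/10000000 : ℝ) ≤ (1/3) * (1/3 : ℝ) + (1/3) * (1/3 : ℝ)^2 := by norm_num
    linarith
  have hu1 : b 1 ≤ (740741/5000000 : ℝ) := by
    have h := hrec 0
    have h1 : (b 0)^2 ≤ ((1/3 : ℝ))^2 := by nlinarith [hu0, (hb 0).1]
    have h2 : (1/3) * (1/3 : ℝ) + (1/3) * (1/3 : ℝ)^2 ≤ (740741/5000000 : ℝ) := by norm_num
    linarith
  have hl2 : (283493/5000000 : ℝ) ≤ b 2 := by
    have h := hrec 1
    have h1 : ((1481481/10000000 : ℝ))^2 ≤ (b 1)^2 := by nlinarith [hl1, (hb 1).1]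
    have h2 : (283493/5000000 : ℝ) ≤ (1/3) * (1481481/10000000 : ℝ) + (1/3) * (1481481/10000000 : ℝ)^2 := by norm_num
    linarith
  have hu2 : b 2 ≤ (566987/10000000 : ℝ) := by
    have h := hrec 1
    have h1 : (b 1)^2 ≤ ((740741/5000000 : ℝ))^2 := by nlinarith [hu1, (hb 1).1]
    have h2 : (1/3) * (740741/5000000 : ℝ) + (1/3) * (740741/5000000 : ℝ)^2 ≤ (566987/10000000 : ℝ) := by norm_num
    linarith
  have hl3 : (199711/10000000 : ℝ) ≤ b 3 := by
    have h := hrec 2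
    have h1 : ((283493/5000000 : ℝ))^2 ≤ (b 2)^2 := by nlinarith [hl2, (hb 2).1]
    have h2 : (199711/10000000 : ℝ) ≤ (1/3) * (283493/5000000 : ℝ) + (1/3) * (283493/5000000 : ℝ)^2 := by norm_num
    linarith
  have hu3 : b 3 ≤ (6241/312500 : ℝ) := by
    have h := hrec 2
    have h1 : (b 2)^2 ≤ ((566987/10000000 : ℝ))^2 := by nlinarith [hu2, (hb 2).1]
    have h2 : (1/3) * (566987/10000000 : ℝ) + (1/3) * (566987/10000000 : ℝ)^2 ≤ (6241/312500 : ℝ) := by norm_num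
    linarith
  have hl4 : (67899/10000000 : ℝ) ≤ b 4 := by
    have h := hrec 3
    have h1 : ((199711/10000000 : ℝ))^2 ≤ (b 3)^2 := by nlinarith [hl3, (hb 3).1]
    have h2 : (67899/10000000 : ℝ) ≤ (1/3) * (199711/10000000 : ℝ) + (1/3) * (199711/10000000 : ℝ)^2 := by norm_num
    linarith
  have hu4 : b 4 ≤ (67901/10000000 : ℝ) := by
    have h := hrec 3
    have h1 : (b 3)^2 ≤ ((6241/312500 : ℝ))^2 := by nlinarith [hu3, (hb 3).1]
    have h2 : (1/3) * (6241/312500 : ℝ) + (1/3) * (6241/312500 : ℝ)^2 ≤ (67901/10000000 : ℝ) := by norm_num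
    linarith
  have hl5 : (11393/5000000 : ℝ) ≤ b 5 := by
    have h := hrec 4
    have h1 : ((67899/10000000 : ℝ))^2 ≤ (b 4)^2 := by nlinarith [hl4, (hb 4).1]
    have h2 : (11393/5000000 : ℝ) ≤ (1/3) * (67899/10000000 : ℝ) + (1/3) * (67899/10000000 : ℝ)^2 := by norm_num
    linarith
  have hu5 : b 5 ≤ (5697/2500000 : ℝ) := by
    have h := hrec 4
    have h1 : (b 4)^2 ≤ ((67901/10000000 : ℝ))^2 := by nlinarith [hu4, (hb 4).1]
    have h2 : (1/3) * (67901/10000000 : ℝ) + (1/3) * (67901/10000000 : ℝ)^2 ≤ (5697/2500000 : ℝ) := by norm_num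
    linarith
  have hl6 : (1903/2500000 : ℝ) ≤ b 6 := by
    have h := hrec 5
    have h1 : ((11393/5000000 : ℝ))^2 ≤ (b 5)^2 := by nlinarith [hl5, (hb 5).1]
    have h2 : (1903/2500000 : ℝ) ≤ (1/3) * (11393/5000000 : ℝ) + (1/3) * (11393/5000000 : ℝ)^2 := by norm_num
    linarith
  have hu6 : b 6 ≤ (3807/5000000 : ℝ) := by
    have h := hrec 5
    have h1 : (b 5)^2 ≤ ((5697/2500000 : ℝ))^2 := by nlinarith [hu5, (hb 5).1]
    have h2 : (1/3) * (5697/2500000 : ℝ) + (1/3) * (5697/2500000 : ℝ)^2 ≤ (3807/5000000 : ℝ) := by norm_num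
    linarith
  have hl7 : (2539/10000000 : ℝ) ≤ b 7 := by
    have h := hrec 6
    have h1 : ((1903/2500000 : ℝ))^2 ≤ (b 6)^2 := by nlinarith [hl6, (hb 6).1]
    have h2 : (2539/10000000 : ℝ) ≤ (1/3) * (1903/2500000 : ℝ) + (1/3) * (1903/2500000 : ℝ)^2 := by norm_num
    linarith
  have hu7 : b 7 ≤ (127/500000 : ℝ) := by
    have h := hrec 6
    have h1 : (b 6)^2 ≤ ((3807/5000000 : ℝ))^2 := by nlinarith [hu6, (hb 6).1]
    have h2 : (1/3) * (3807/5000000 : ℝ) + (1/3) * (3807/5000000 : ℝ)^2 ≤ (127/500000 : ℝ) := by norm_num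
    linarith
  have hl8 : (423/5000000 : ℝ) ≤ b 8 := by
    have h := hrec 7
    have h1 : ((2539/10000000 : ℝ))^2 ≤ (b 7)^2 := by nlinarith [hl7, (hb 7).1]
    have h2 : (423/5000000 : ℝ) ≤ (1/3) * (2539/10000000 : ℝ) + (1/3) * (2539/10000000 : ℝ)^2 := by norm_num
    linarith
  have hu8 : b 8 ≤ (847/10000000 : ℝ) := by
    have h := hrec 7
    have h1 : (b 7)^2 ≤ ((127/500000 : ℝ))^2 := by nlinarith [hu7, (hb 7).1]
    have h2 : (1/3) * (127/500000 : ℝ) + (1/3) * (127/500000 : ℝ)^2 ≤ (847/10000000 : ℝ) := by norm_num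
    linarith
  have hl9 : (141/5000000 : ℝ) ≤ b 9 := by
    have h := hrec 8
    have h1 : ((423/5000000 : ℝ))^2 ≤ (b 8)^2 := by nlinarith [hl8, (hb 8).1]
    have h2 : (141/5000000 : ℝ) ≤ (1/3) * (423/5000000 : ℝ) + (1/3) * (423/5000000 : ℝ)^2 := by norm_num
    linarith
  have hu9 : b 9 ≤ (283/10000000 : ℝ) := by
    have h := hrec 8
    have h1 : (b 8)^2 ≤ ((847/10000000 : ℝ))^2 := by nlinarith [hu8, (hb 8).1]
    have h2 : (1/3) * (847/10000000 : ℝ) + (1/3) * (847/10000000 : ℝ)^2 ≤ (283/10000000 : ℝ) := by norm_num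
    linarith
  have hl10 : (47/5000000 : ℝ) ≤ b 10 := by
    have h := hrec 9
    have h1 : ((141/5000000 : ℝ))^2 ≤ (b 9)^2 := by nlinarith [hl9, (hb 9).1]
    have h2 : (47/5000000 : ℝ) ≤ (1/3) * (141/5000000 : ℝ) + (1/3) * (141/5000000 : ℝ)^2 := by norm_num
    linarith
  have hu10 : b 10 ≤ (19/2000000 : ℝ) := by
    have h := hrec 9
    have h1 : (b 9)^2 ≤ ((283/10000000 : ℝ))^2 := by nlinarith [hu9, (hb 9).1]
    have h2 : (1/3) * (283/10000000 : ℝ) + (1/3) * (283/10000000 : ℝ)^2 ≤ (19/2000000 : ℝ) := by norm_num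
    linarith
  have hsplit : (∑ i ∈ Finset.range 10, b i) + ∑' i, b (i + 10) = ∑' i, b i :=
    Summable.sum_add_tsum_nat_add 10 hsum
  have hpart : ∑ i ∈ Finset.range 10, b i = b 0 + b 1 + b 2 + b 3 + b 4 + b 5 + b 6 + b 7 + b 8 + b 9 := by
    simp [Finset.sum_range_succ]
  have hts : Summable (fun i => b (i + 10)) := (summable_nat_add_iff 10).mpr hsum
  have htail_nonneg : 0 ≤ ∑' i, b (i + 10) :=
    tsum_nonneg (fun i => (hb _).1.le)
  have htail_le : ∑' i, b (i + 10) ≤ b 10 * (9/5) := by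
    calc ∑' i, b (i + 10) ≤ ∑' i, b 10 * (4/9)^i := by
          apply Summable.tsum_le_tsum _ hts (hgs.mul_left _)
          intro i
          have := hgeom 10 i
          simpa [add_comm] using this
      _ = b 10 * (9/5) := by
          rw [tsum_mul_left, tsum_geometric_of_lt_one (by norm_num) (by norm_num)]
          norm_num
  refine ⟨hsum, ?_, ?_⟩
  · rw [← hsplit, hpart]
    norm_num
    linarith [hl1, hl2, hl3, hl4, hl5, hl6, hl7, hl8, hl9, htail_nonneg, h0]
  · rw [← hsplit, hpart]
    norm_num
    linarith [hu1, hu2, hu3, hu4, hu5, hu6, hu7, hu8, hu9, hu10, htail_le, h0]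
end

section
/- Define b_k by b_0 = 1/3 and b_{k+1} = (1/3)*b_k + (1/3)*b_k^2. Then the ratio E = (sum_{k≥0} k*b_k)/(sum_{k≥0} b_k) satisfies 0.6464 < E < 0.6465. -/
set_option maxHeartbeats 4000000

theorem balanced_expected_rank_bounds (b : ℕ → ℝ)
    (h0 : b 0 = 1/3) (hrec : ∀ k, b (k+1) = (1/3) * b k + (1/3) * (b k)^2) :
    0.6464 < (∑' k : ℕ, (k : ℝ) * b k) / (∑' k, b k) ∧
    (∑' k : ℕ, (k : ℝ) * b k) / (∑' k, b k) < 0.6465 := by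
  have hnn : ∀ k, 0 ≤ b k := by
    intro k
    induction k with
    | zero => rw [h0]; norm_num
    | succ n ih => rw [hrec n]; nlinarith [sq_nonneg (b n)]
  have hub : ∀ k, b k ≤ 1/3 := by
    intro k
    induction k with
    | zero => rw [h0]
    | succ n ih => rw [hrec n]; nlinarith [hnn n]
  have hgeo : ∀ k, b k ≤ (1/3) * (4/9)^k := by
    intro k
    induction k with
    | zero => rw [h0]; norm_num
    | succ n ih =>
      rw [hrec n]
      have hps : (4/9:ℝ)^(n+1) = (4/9)*(4/9)^n := by ring
      nlinarith [hnn n, hub n, pow_nonneg (by norm_num : (0:ℝ) ≤ 4/9) n]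
  have hsb : Summable b := by
    apply Summable.of_nonneg_of_le hnn hgeo
    exact (summable_geometric_of_lt_one (by norm_num) (by norm_num)).mul_left _
  have hst : Summable (fun k : ℕ => (k:ℝ) * b k) := by
    apply Summable.of_nonneg_of_le (fun k => mul_nonneg (Nat.cast_nonneg k) (hnn k))
      (fun k => ?_) (((summable_pow_mul_geometric_of_norm_lt_one 1
        (by rw [Real.norm_eq_abs]; rw [abs_of_nonneg] <;> norm_num : ‖(4/9:ℝ)‖ < 1)).mul_left (1/3)))
    have := hgeo k
    simp only [pow_one]
    nlinarith [Nat.cast_nonneg (α := ℝ) k]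
  have h1 : (37037037037037/250000000000000 : ℝ) ≤ b 1 ∧ b 1 ≤ (148148148148149/1000000000000000 : ℝ) := by
    rw [hrec 0, h0]; norm_num
  have h2 : (1771833561957/31250000000000 : ℝ) ≤ b 2 ∧ b 2 ≤ (453589391861/8000000000000 : ℝ) := by
    obtain ⟨hl, hu⟩ := h1
    have h2l : ((37037037037037/250000000000000 : ℝ))^2 ≤ (b 1)^2 := pow_le_pow_left₀ (by norm_num) hl 2
    have h2u : (b 1)^2 ≤ ((148148148148149/1000000000000000 : ℝ))^2 := pow_le_pow_left₀ (hnn 1) hu 2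
    rw [hrec 1]
    constructor <;> linarith
  have h3 : (19971137871337/1000000000000000 : ℝ) ≤ b 3 ∧ b 3 ≤ (9985568935669/500000000000000 : ℝ) := by
    obtain ⟨hl, hu⟩ := h2
    have h2l : ((1771833561957/31250000000000 : ℝ))^2 ≤ (b 2)^2 := pow_le_pow_left₀ (by norm_num) hl 2
    have h2u : (b 2)^2 ≤ ((453589391861/8000000000000 : ℝ))^2 := pow_le_pow_left₀ (hnn 2) hu 2
    rw [hrec 2]
    constructor <;> linarith
  have h4 : (6789994739737/1000000000000000 : ℝ) ≤ b 4 ∧ b 4 ≤ (3394997369869/500000000000000 : ℝ) := by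
    obtain ⟨hl, hu⟩ := h3
    have h2l : ((19971137871337/1000000000000000 : ℝ))^2 ≤ (b 3)^2 := pow_le_pow_left₀ (by norm_num) hl 2
    have h2u : (b 3)^2 ≤ ((9985568935669/500000000000000 : ℝ))^2 := pow_le_pow_left₀ (hnn 3) hu 2
    rw [hrec 3]
    constructor <;> linarith
  have h5 : (1139349794717/500000000000000 : ℝ) ≤ b 5 ∧ b 5 ≤ (455739917887/200000000000000 : ℝ) := by
    obtain ⟨hl, hu⟩ := h4
    have h2l : ((6789994739737/1000000000000000 : ℝ))^2 ≤ (b 4)^2 := pow_le_pow_left₀ (by norm_num) hl 2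
    have h2u : (b 4)^2 ≤ ((3394997369869/500000000000000 : ℝ))^2 := pow_le_pow_left₀ (hnn 4) hu 2
    rw [hrec 4]
    constructor <;> linarith
  have h6 : (609037883/800000000000 : ℝ) ≤ b 6 ∧ b 6 ≤ (95162169219/125000000000000 : ℝ) := by
    obtain ⟨hl, hu⟩ := h5
    have h2l : ((1139349794717/500000000000000 : ℝ))^2 ≤ (b 5)^2 := pow_le_pow_left₀ (by norm_num) hl 2
    have h2u : (b 5)^2 ≤ ((455739917887/200000000000000 : ℝ))^2 := pow_le_pow_left₀ (hnn 5) hu 2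
    rw [hrec 5]
    constructor <;> linarith
  have h7 : (253958975803/1000000000000000 : ℝ) ≤ b 7 ∧ b 7 ≤ (50791795161/200000000000000 : ℝ) := by
    obtain ⟨hl, hu⟩ := h6
    have h2l : ((609037883/800000000000 : ℝ))^2 ≤ (b 6)^2 := pow_le_pow_left₀ (by norm_num) hl 2
    have h2u : (b 6)^2 ≤ ((95162169219/125000000000000 : ℝ))^2 := pow_le_pow_left₀ (hnn 6) hu 2
    rw [hrec 6]
    constructor <;> linarith
  have h8 : (84674490321/1000000000000000 : ℝ) ≤ b 8 ∧ b 8 ≤ (84674490323/1000000000000000 : ℝ) := by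
    obtain ⟨hl, hu⟩ := h7
    have h2l : ((253958975803/1000000000000000 : ℝ))^2 ≤ (b 7)^2 := pow_le_pow_left₀ (by norm_num) hl 2
    have h2u : (b 7)^2 ≤ ((50791795161/200000000000000 : ℝ))^2 := pow_le_pow_left₀ (hnn 7) hu 2
    rw [hrec 7]
    constructor <;> linarith
  have h9 : (2822722003/100000000000000 : ℝ) ≤ b 9 ∧ b 9 ≤ (28227220031/1000000000000000 : ℝ) := by
    obtain ⟨hl, hu⟩ := h8
    have h2l : ((84674490321/1000000000000000 : ℝ))^2 ≤ (b 8)^2 := pow_le_pow_left₀ (by norm_num) hl 2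
    have h2u : (b 8)^2 ≤ ((84674490323/1000000000000000 : ℝ))^2 := pow_le_pow_left₀ (hnn 8) hu 2
    rw [hrec 8]
    constructor <;> linarith
  have h10 : (1881867787/200000000000000 : ℝ) ≤ b 10 ∧ b 10 ≤ (1176167367/125000000000000 : ℝ) := by
    obtain ⟨hl, hu⟩ := h9
    have h2l : ((2822722003/100000000000000 : ℝ))^2 ≤ (b 9)^2 := pow_le_pow_left₀ (by norm_num) hl 2
    have h2u : (b 9)^2 ≤ ((28227220031/1000000000000000 : ℝ))^2 := pow_le_pow_left₀ (hnn 9) hu 2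
    rw [hrec 9]
    constructor <;> linarith
  have h11 : (3136475823/1000000000000000 : ℝ) ≤ b 11 ∧ b 11 ≤ (196029739/62500000000000 : ℝ) := by
    obtain ⟨hl, hu⟩ := h10
    have h2l : ((1881867787/200000000000000 : ℝ))^2 ≤ (b 10)^2 := pow_le_pow_left₀ (by norm_num) hl 2
    have h2u : (b 10)^2 ≤ ((1176167367/125000000000000 : ℝ))^2 := pow_le_pow_left₀ (hnn 10) hu 2
    rw [hrec 10]
    constructor <;> linarith
  have h12 : (52274761/50000000000000 : ℝ) ≤ b 12 ∧ b 12 ≤ (1045495221/1000000000000000 : ℝ) := by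
    obtain ⟨hl, hu⟩ := h11
    have h2l : ((3136475823/1000000000000000 : ℝ))^2 ≤ (b 11)^2 := pow_le_pow_left₀ (by norm_num) hl 2
    have h2u : (b 11)^2 ≤ ((196029739/62500000000000 : ℝ))^2 := pow_le_pow_left₀ (hnn 11) hu 2
    rw [hrec 11]
    constructor <;> linarith
  have h13 : (348498771/1000000000000000 : ℝ) ≤ b 13 ∧ b 13 ≤ (87124693/250000000000000 : ℝ) := by
    obtain ⟨hl, hu⟩ := h12
    have h2l : ((52274761/50000000000000 : ℝ))^2 ≤ (b 12)^2 := pow_le_pow_left₀ (by norm_num) hl 2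
    have h2u : (b 12)^2 ≤ ((1045495221/1000000000000000 : ℝ))^2 := pow_le_pow_left₀ (hnn 12) hu 2
    rw [hrec 12]
    constructor <;> linarith
  have h14 : (116166297/1000000000000000 : ℝ) ≤ b 14 ∧ b 14 ≤ (58083149/500000000000000 : ℝ) := by
    obtain ⟨hl, hu⟩ := h13
    have h2l : ((348498771/1000000000000000 : ℝ))^2 ≤ (b 13)^2 := pow_le_pow_left₀ (by norm_num) hl 2
    have h2u : (b 13)^2 ≤ ((87124693/250000000000000 : ℝ))^2 := pow_le_pow_left₀ (hnn 13) hu 2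
    rw [hrec 13]
    constructor <;> linarith
  have h15 : (38722103/1000000000000000 : ℝ) ≤ b 15 ∧ b 15 ≤ (4840263/125000000000000 : ℝ) := by
    obtain ⟨hl, hu⟩ := h14
    have h2l : ((116166297/1000000000000000 : ℝ))^2 ≤ (b 14)^2 := pow_le_pow_left₀ (by norm_num) hl 2
    have h2u : (b 14)^2 ≤ ((58083149/500000000000000 : ℝ))^2 := pow_le_pow_left₀ (hnn 14) hu 2
    rw [hrec 14]
    constructor <;> linarith
  have h16 : (1613421/125000000000000 : ℝ) ≤ b 16 ∧ b 16 ≤ (12907369/1000000000000000 : ℝ) := by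
    obtain ⟨hl, hu⟩ := h15
    have h2l : ((38722103/1000000000000000 : ℝ))^2 ≤ (b 15)^2 := pow_le_pow_left₀ (by norm_num) hl 2
    have h2u : (b 15)^2 ≤ ((4840263/125000000000000 : ℝ))^2 := pow_le_pow_left₀ (hnn 15) hu 2
    rw [hrec 15]
    constructor <;> linarith
  have h17 : (537807/125000000000000 : ℝ) ≤ b 17 ∧ b 17 ≤ (4302457/1000000000000000 : ℝ) := by
    obtain ⟨hl, hu⟩ := h16
    have h2l : ((1613421/125000000000000 : ℝ))^2 ≤ (b 16)^2 := pow_le_pow_left₀ (by norm_num) hl 2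
    have h2u : (b 16)^2 ≤ ((12907369/1000000000000000 : ℝ))^2 := pow_le_pow_left₀ (hnn 16) hu 2
    rw [hrec 16]
    constructor <;> linarith
  have h18 : (179269/125000000000000 : ℝ) ≤ b 18 ∧ b 18 ≤ (1434153/1000000000000000 : ℝ) := by
    obtain ⟨hl, hu⟩ := h17
    have h2l : ((537807/125000000000000 : ℝ))^2 ≤ (b 17)^2 := pow_le_pow_left₀ (by norm_num) hl 2
    have h2u : (b 17)^2 ≤ ((4302457/1000000000000000 : ℝ))^2 := pow_le_pow_left₀ (hnn 17) hu 2
    rw [hrec 17]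
    constructor <;> linarith
  have h19 : (9561/20000000000000 : ℝ) ≤ b 19 ∧ b 19 ≤ (119513/250000000000000 : ℝ) := by
    obtain ⟨hl, hu⟩ := h18
    have h2l : ((179269/125000000000000 : ℝ))^2 ≤ (b 18)^2 := pow_le_pow_left₀ (by norm_num) hl 2
    have h2u : (b 18)^2 ≤ ((1434153/1000000000000000 : ℝ))^2 := pow_le_pow_left₀ (hnn 18) hu 2
    rw [hrec 18]
    constructor <;> linarith
  have h20 : b 20 ≤ (16/100000000000 : ℝ) := by
    obtain ⟨hl, hu⟩ := h19
    have h2u : (b 19)^2 ≤ ((119513/250000000000000 : ℝ))^2 := pow_le_pow_left₀ (hnn 19) hu 2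
    rw [hrec 19]
    linarith
  -- tail geometric bound
  have key : ∀ j : ℕ, b (j + 20) ≤ (16/100000000000 : ℝ) * (3334/10000)^j := by
    intro j
    induction j with
    | zero => simpa using h20
    | succ n ih =>
      have hpn : (0:ℝ) ≤ (3334/10000 : ℝ)^n := by positivity
      have hp1 : (3334/10000 : ℝ)^n ≤ 1 := pow_le_one₀ (by norm_num) (by norm_num)
      have e : n + 1 + 20 = (n + 20) + 1 := by ring
      rw [e, hrec]
      have hps : (3334/10000:ℝ)^(n+1) = (3334/10000)*(3334/10000)^n := by ring
      nlinarith [hnn (n + 20), ih]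
  have hsgeo : Summable (fun j : ℕ => (16/100000000000 : ℝ) * (3334/10000)^j) :=
    (summable_geometric_of_lt_one (by norm_num) (by norm_num)).mul_left _
  have hsb' : Summable (fun j : ℕ => b (j + 20)) := (summable_nat_add_iff 20).mpr hsb
  have hst' : Summable (fun j : ℕ => ((j + 20 : ℕ) : ℝ) * b (j + 20)) :=
    (summable_nat_add_iff 20).mpr hst
  have tsum_g : ∑' j : ℕ, ((3334/10000 : ℝ))^j = (1 - 3334/10000)⁻¹ :=
    tsum_geometric_of_lt_one (by norm_num) (by norm_num)
  have tsum_jg : ∑' j : ℕ, (j : ℝ) * (3334/10000)^j = (3334/10000) / (1 - 3334/10000)^2 :=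
    tsum_coe_mul_geometric_of_norm_lt_one
      (by rw [Real.norm_eq_abs, abs_of_nonneg] <;> norm_num)
  -- tail sum bounds
  have tailS : ∑' j : ℕ, b (j + 20) ≤ (16/100000000000 : ℝ) * (1 - 3334/10000)⁻¹ := by
    calc ∑' j : ℕ, b (j + 20) ≤ ∑' j : ℕ, (16/100000000000 : ℝ) * (3334/10000)^j :=
          Summable.tsum_le_tsum key hsb' hsgeo
      _ = (16/100000000000 : ℝ) * (1 - 3334/10000)⁻¹ := by rw [tsum_mul_left, tsum_g]
  have tailS0 : (0:ℝ) ≤ ∑' j : ℕ, b (j + 20) := tsum_nonneg (fun j => hnn _)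
  have tailT0 : (0:ℝ) ≤ ∑' j : ℕ, ((j + 20 : ℕ) : ℝ) * b (j + 20) :=
    tsum_nonneg (fun j => mul_nonneg (Nat.cast_nonneg _) (hnn _))
  have hsjg : Summable (fun n : ℕ => (n : ℝ) * (3334/10000)^n) := by
    have := summable_pow_mul_geometric_of_norm_lt_one 1
      (by rw [Real.norm_eq_abs, abs_of_nonneg] <;> norm_num : ‖(3334/10000:ℝ)‖ < 1)
    simpa [pow_one] using this
  have hsum2 : Summable (fun j : ℕ => (16/100000000000 : ℝ) * ((j : ℝ) * (3334/10000)^j)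
      + (20 * (16/100000000000 : ℝ)) * (3334/10000)^j) :=
    (hsjg.mul_left _).add ((summable_geometric_of_lt_one (by norm_num) (by norm_num)).mul_left _)
  have tailT : ∑' j : ℕ, ((j + 20 : ℕ) : ℝ) * b (j + 20) ≤
      (16/100000000000 : ℝ) * ((3334/10000) / (1 - 3334/10000)^2)
      + (20 * (16/100000000000 : ℝ)) * (1 - 3334/10000)⁻¹ := by
    have step : ∀ j : ℕ, ((j + 20 : ℕ) : ℝ) * b (j + 20) ≤
        (16/100000000000 : ℝ) * ((j : ℝ) * (3334/10000)^j)
        + (20 * (16/100000000000 : ℝ)) * (3334/10000)^j := by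
      intro j
      have hk := key j
      have hc : (0:ℝ) ≤ (j : ℝ) := Nat.cast_nonneg j
      have := mul_le_mul_of_nonneg_left hk (by linarith : (0:ℝ) ≤ (j:ℝ) + 20)
      push_cast
      nlinarith
    calc ∑' j : ℕ, ((j + 20 : ℕ) : ℝ) * b (j + 20) ≤ _ := Summable.tsum_le_tsum step hst' hsum2
      _ = _ := by
          rw [Summable.tsum_add (hsjg.mul_left _)
            ((summable_geometric_of_lt_one (by norm_num) (by norm_num)).mul_left _),
            tsum_mul_left, tsum_mul_left, tsum_jg, tsum_g]
  -- decompositions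
  have decS := Summable.sum_add_tsum_nat_add 20 hsb
  have decT := Summable.sum_add_tsum_nat_add 20 hst
  have hSpart : (1705086778571077/3000000000000000 : ℝ) ≤ (∑ k ∈ Finset.range 20, b k) ∧
      (∑ k ∈ Finset.range 20, b k) ≤ (852543389285573/1500000000000000 : ℝ) := by
    simp only [Finset.sum_range_succ, Finset.sum_range_zero]
    constructor <;> linarith [h0, h1.1, h1.2, h2.1, h2.2, h3.1, h3.2, h4.1, h4.2, h5.1, h5.2, h6.1, h6.2, h7.1, h7.2, h8.1, h8.2, h9.1, h9.2, h10.1, h10.2, h11.1, h11.2, h12.1, h12.2, h13.1, h13.2, h14.1, h14.2, h15.1, h15.2, h16.1, h16.2, h17.1, h17.2, h18.1, h18.2, h19.1, h19.2]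
  have hTpart : (367437517256579/1000000000000000 : ℝ) ≤ (∑ k ∈ Finset.range 20, (k : ℝ) * b k) ∧
      (∑ k ∈ Finset.range 20, (k : ℝ) * b k) ≤ (367437517256809/1000000000000000 : ℝ) := by
    simp only [Finset.sum_range_succ, Finset.sum_range_zero]
    push_cast
    constructor <;> linarith [h0, h1.1, h1.2, h2.1, h2.2, h3.1, h3.2, h4.1, h4.2, h5.1, h5.2, h6.1, h6.2, h7.1, h7.2, h8.1, h8.2, h9.1, h9.2, h10.1, h10.2, h11.1, h11.2, h12.1, h12.2, h13.1, h13.2, h14.1, h14.2, h15.1, h15.2, h16.1, h16.2, h17.1, h17.2, h18.1, h18.2, h19.1, h19.2]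
  have hSlo : (1705086778571077/3000000000000000 : ℝ) ≤ ∑' k, b k := by
    rw [← decS]; linarith [hSpart.1]
  have hShi : ∑' k, b k ≤ (852543389285573/1500000000000000 : ℝ) + (16/100000000000 : ℝ) * (1 - 3334/10000)⁻¹ := by
    rw [← decS]; linarith [hSpart.2]
  have hTlo : (367437517256579/1000000000000000 : ℝ) ≤ ∑' k : ℕ, (k : ℝ) * b k := by
    rw [← decT]; linarith [hTpart.1]
  have hThi : ∑' k : ℕ, (k : ℝ) * b k ≤ (367437517256809/1000000000000000 : ℝ)
      + ((16/100000000000 : ℝ) * ((3334/10000) / (1 - 3334/10000)^2)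
      + (20 * (16/100000000000 : ℝ)) * (1 - 3334/10000)⁻¹) := by
    rw [← decT]; linarith [hTpart.2]
  have hSpos : (0:ℝ) < ∑' k, b k := lt_of_lt_of_le (by norm_num) hSlo
  have c1 : (0.6464 : ℝ) * ((852543389285573/1500000000000000 : ℝ) + (16/100000000000 : ℝ) * (1 - 3334/10000)⁻¹)
      < (367437517256579/1000000000000000 : ℝ) := by norm_num
  have c2 : (367437517256809/1000000000000000 : ℝ) + ((16/100000000000 : ℝ) * ((3334/10000) / (1 - 3334/10000)^2)
      + (20 * (16/100000000000 : ℝ)) * (1 - 3334/10000)⁻¹)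
      < (0.6465 : ℝ) * (1705086778571077/3000000000000000 : ℝ) := by norm_num
  constructor
  · rw [lt_div_iff₀ hSpos]
    have := mul_le_mul_of_nonneg_left hShi (by norm_num : (0:ℝ) ≤ 0.6464)
    linarith
  · rw [div_lt_iff₀ hSpos]
    have := mul_le_mul_of_nonneg_left hSlo (by norm_num : (0:ℝ) ≤ 0.6465)
    linarith
end

section
/- Let b : ℕ → ℝ be a nonnegative sequence satisfying, for all sufficiently large n, b(n) ≤ sum over k from ⌈log2 n⌉ to n - ⌈log2 n⌉ of b(k)*b(n-k-1), together with b(n) ≤ 2.9^n/n^2 for all n up to some explicit initial threshold N0. Then b(n) ≤ 2.9^n/n^2 for all n ≥ 1. -/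
/-!
Strong induction on `n`. Beyond the threshold both factors of every term `b k * b j` of the
recurrence satisfy the bound, and since `k + j = n - 1` forces `max k j ≥ (n - 1) / 2`,
`1 / (k² j²) ≤ 4 / (n - 1)² · (1 / k² + 1 / j²)`. Both `k` and `j` are at least `log₂ n - 1`, so
the tails of `∑ 1 / k²` bound the sum by `2.9 ^ (n - 1) · 4 / (n - 1)² · 4 / (log₂ n - 1)`; for
`n > 2¹⁰` this is at most `2.9 ^ (n - 1) · 1.6 / (n - 1)² ≤ 2.9 ^ n / n²`.
-/

open Finset

lemma one_div_sq_mul_sq_le {a c : ℝ} (ha : 0 < a) (hc : 0 < c) :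
    1 / (a ^ 2 * c ^ 2) ≤ 4 / (a + c) ^ 2 * ((a ^ 2)⁻¹ + (c ^ 2)⁻¹) := by
  rw [← one_div, ← one_div, div_add_div _ _ (by positivity) (by positivity), div_mul_div_comm,
    div_le_div_iff₀ (by positivity) (by positivity)]
  nlinarith [sq_nonneg (a - c), sq_nonneg (a * c), mul_pos ha hc, sq_nonneg (a + c)]

lemma pow_div_sq_mul_pow_div_sq_le {c : ℝ} (hc : 0 ≤ c) {k j : ℕ} (hk : 0 < k) (hj : 0 < j) :
    c ^ k / (k : ℝ) ^ 2 * (c ^ j / (j : ℝ) ^ 2) ≤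
      c ^ (k + j) * (4 / ((k + j : ℕ) : ℝ) ^ 2) * (((k : ℝ) ^ 2)⁻¹ + ((j : ℝ) ^ 2)⁻¹) := by
  have key := one_div_sq_mul_sq_le (a := k) (c := j) (by positivity) (by positivity)
  calc c ^ k / (k : ℝ) ^ 2 * (c ^ j / (j : ℝ) ^ 2)
      = c ^ (k + j) * (1 / ((k : ℝ) ^ 2 * (j : ℝ) ^ 2)) := by rw [pow_add]; ring
    _ ≤ c ^ (k + j) * (4 / ((k : ℝ) + j) ^ 2 * (((k : ℝ) ^ 2)⁻¹ + ((j : ℝ) ^ 2)⁻¹)) := by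
      gcongr
    _ = _ := by push_cast; ring

lemma sum_inv_sq_comp_le {s : Finset ℕ} {g : ℕ → ℕ} (hg : Set.InjOn g s) {a N : ℕ}
    (hs : ∀ k ∈ s, g k ∈ Ioo a N) :
    ∑ k ∈ s, ((g k : ℝ) ^ 2)⁻¹ ≤ 2 / (a + 1) := by
  rw [← sum_image (f := fun i : ℕ => ((i : ℝ) ^ 2)⁻¹) hg]
  refine (sum_le_sum_of_subset_of_nonneg ?_ fun _ _ _ => by positivity).trans
    (sum_Ioo_inv_sq_le a N)
  simpa [Finset.subset_iff] using hs

lemma sum_Icc_inv_sq_add_inv_sq_reflect_le (n : ℕ) {L : ℕ} (hL : 2 ≤ L) :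
    ∑ k ∈ Icc L (n - L), (((k : ℝ) ^ 2)⁻¹ + (((n - k - 1 : ℕ) : ℝ) ^ 2)⁻¹) ≤ 4 / ((L : ℝ) - 1) := by
  have hcast : ((L - 2 : ℕ) : ℝ) + 1 = (L : ℝ) - 1 := by
    rw [Nat.cast_sub hL]; push_cast; ring
  have hleft := sum_inv_sq_comp_le (s := Icc L (n - L)) (g := id) (Set.injOn_id _)
    (a := L - 2) (N := n) fun k hk => by simp only [mem_Icc, mem_Ioo, id] at hk ⊢; omega
  have hright := sum_inv_sq_comp_le (s := Icc L (n - L)) (g := fun k => n - k - 1)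
    (fun k hk k' hk' h => by simp only [coe_Icc, Set.mem_Icc] at hk hk' h; omega)
    (a := L - 2) (N := n) fun k hk => by simp only [mem_Icc, mem_Ioo] at hk ⊢; omega
  simp only [id, hcast] at hleft hright
  rw [sum_add_distrib, show 4 / ((L : ℝ) - 1) = 2 / (L - 1) + 2 / (L - 1) by ring]
  exact add_le_add hleft hright

lemma pow_pred_mul_div_sq_le {n : ℕ} (hn : 4 ≤ n) :
    (2.9 : ℝ) ^ (n - 1) * (4 / ((n - 1 : ℕ) : ℝ) ^ 2) * (2 / 5) ≤ (2.9 : ℝ) ^ n / n ^ 2 := by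
  obtain ⟨m, rfl⟩ : ∃ m, n = m + 1 := ⟨n - 1, by omega⟩
  have hm : (3 : ℝ) ≤ m := by exact_mod_cast (by omega : 3 ≤ m)
  rw [Nat.add_sub_cancel, pow_succ (2.9 : ℝ) m, mul_assoc, mul_div_assoc, Nat.cast_succ]
  gcongr
  rw [div_mul_div_comm, div_le_div_iff₀ (by positivity) (by positivity)]
  nlinarith

lemma le_of_balanced_recurrence (b : ℕ → ℝ) (hb : ∀ n, 0 ≤ b n) {n : ℕ} (hn : 2 ^ 10 < n)
    (ih : ∀ m < n, 1 ≤ m → b m ≤ (2.9 : ℝ) ^ m / m ^ 2)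
    (hrec : b n ≤ ∑ k ∈ Icc (Nat.clog 2 n) (n - Nat.clog 2 n), b k * b (n - k - 1)) :
    b n ≤ (2.9 : ℝ) ^ n / n ^ 2 := by
  set L := Nat.clog 2 n
  have hL : 11 ≤ L := (Nat.lt_clog_iff_pow_lt one_lt_two).2 hn
  set C : ℝ := (2.9 : ℝ) ^ (n - 1) * (4 / ((n - 1 : ℕ) : ℝ) ^ 2)
  have hterm : ∀ k ∈ Icc L (n - L),
      b k * b (n - k - 1) ≤ C * (((k : ℝ) ^ 2)⁻¹ + (((n - k - 1 : ℕ) : ℝ) ^ 2)⁻¹) := by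
    intro k hk
    rw [mem_Icc] at hk
    have hsum : k + (n - k - 1) = n - 1 := by omega
    calc b k * b (n - k - 1)
        ≤ (2.9 : ℝ) ^ k / (k : ℝ) ^ 2 * ((2.9 : ℝ) ^ (n - k - 1) / ((n - k - 1 : ℕ) : ℝ) ^ 2) :=
          mul_le_mul (ih k (by omega) (by omega)) (ih _ (by omega) (by omega)) (hb _)
            (by positivity)
      _ ≤ C * (((k : ℝ) ^ 2)⁻¹ + (((n - k - 1 : ℕ) : ℝ) ^ 2)⁻¹) := by
          simpa only [hsum] using
            pow_div_sq_mul_pow_div_sq_le (by norm_num) (by omega : 0 < k) (by omega : 0 < n - k - 1)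
  have hS : ∑ k ∈ Icc L (n - L), (((k : ℝ) ^ 2)⁻¹ + (((n - k - 1 : ℕ) : ℝ) ^ 2)⁻¹) ≤ 2 / 5 := by
    have hLR : (11 : ℝ) ≤ L := by exact_mod_cast hL
    refine (sum_Icc_inv_sq_add_inv_sq_reflect_le n (by omega)).trans ?_
    rw [div_le_div_iff₀ (by linarith) (by norm_num)]
    linarith
  calc b n ≤ ∑ k ∈ Icc L (n - L), b k * b (n - k - 1) := hrec
    _ ≤ ∑ k ∈ Icc L (n - L), C * (((k : ℝ) ^ 2)⁻¹ + (((n - k - 1 : ℕ) : ℝ) ^ 2)⁻¹) :=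
        sum_le_sum hterm
    _ ≤ C * (2 / 5) := by rw [← mul_sum]; gcongr
    _ ≤ (2.9 : ℝ) ^ n / n ^ 2 := pow_pred_mul_div_sq_le (by omega)

theorem balanced_count_bound :
    ∃ N0 : ℕ, ∀ b : ℕ → ℝ, (∀ n, 0 ≤ b n) →
      (∀ n, N0 < n →
        b n ≤ ∑ k ∈ Finset.Icc (Nat.clog 2 n) (n - Nat.clog 2 n), b k * b (n - k - 1)) →
      (∀ n, 1 ≤ n → n ≤ N0 → b n ≤ (2.9 : ℝ)^n / n^2) →
      ∀ n, 1 ≤ n → b n ≤ (2.9 : ℝ)^n / n^2 := by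
  refine ⟨2 ^ 10, fun b hb hrec hbase n => ?_⟩
  induction n using Nat.strong_induction_on with
  | _ n ih =>
    intro hn
    rcases le_or_gt n (2 ^ 10) with hsmall | hlarge
    · exact hbase n hn hsmall
    · exact le_of_balanced_recurrence b hb hlarge ih (hrec n hlarge)
end
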